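/- Let y*(x,t) = γ(t)χ(x)e₁ where γ : [0,1] → [0,∞) is smooth with γ(t) = M on [1/4, 3/4], and χ is a smooth cutoff equal to 1 on the closure of Ω₂ = (−l, L+l) × (−l, W+l). Let 𝒴(x,s,t) be the flow of y*. Then if M > 2(L + 2l), every point x ∈ closure(Ω₂) satisfies 𝒴(x, 0, 1) ∉ closure(Ω₂); that is, the flow transports every point of Ω₂ outside of Ω₂ by time 1. -/
import Mathlib


/-- The return-method flow `𝒴` of the field `y*(x,t) = γ(t)χ(x)e₁` transports
every point of `closure(Ω₂)`, `Ω₂ = (−l,L+l)×(−l,W+l)`, outside of `closure(Ω₂)`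
by time `1`, provided `M > 2(L + 2l)`, where `γ ≡ M` on `[1/4,3/4]`. -/
theorem flow_flushes_domain
    (L W l M : ℝ) (hL : 0 < L) (hW : 0 < W) (hl : 0 < l)
    (γ : ℝ → ℝ) (hγs : ContDiff ℝ (⊤ : ℕ∞) γ) (hγ0 : ∀ t, 0 ≤ γ t)
    (hsupp : ∀ t, t ∉ Set.Ioo (0:ℝ) 1 → γ t = 0)
    (hγM : ∀ t ∈ Set.Icc (1/4 : ℝ) (3/4), γ t = M)
    (χ : ℝ × ℝ → ℝ) (hχs : ContDiff ℝ (⊤ : ℕ∞) χ)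
    (hχ01 : ∀ x, 0 ≤ χ x ∧ χ x ≤ 1)
    (hχ1 : ∀ x ∈ closure (Set.Ioo (-l) (L + l) ×ˢ Set.Ioo (-l) (W + l)), χ x = 1)
    (Y : ℝ × ℝ → ℝ → ℝ → ℝ × ℝ)
    (hflow : ∀ x s t, HasDerivAt (fun τ => Y x s τ) (γ t * χ (Y x s t), (0:ℝ)) t)
    (hinit : ∀ x s, Y x s s = x)
    (hM : 2 * (L + 2 * l) < M) :
    ∀ x ∈ closure (Set.Ioo (-l) (L + l) ×ˢ Set.Ioo (-l) (W + l)),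
      Y x 0 1 ∉ closure (Set.Ioo (-l) (L + l) ×ˢ Set.Ioo (-l) (W + l)) := by
  intro x hx hx1
  have hcl : closure (Set.Ioo (-l) (L + l) ×ˢ Set.Ioo (-l) (W + l))
      = Set.Icc (-l) (L + l) ×ˢ Set.Icc (-l) (W + l) := by
    rw [closure_prod_eq, closure_Ioo (by linarith), closure_Ioo (by linarith)]
  set f : ℝ → ℝ := fun t => (Y x 0 t).1 with hf
  set g : ℝ → ℝ := fun t => (Y x 0 t).2 with hg
  have hfd : ∀ t, HasDerivAt f (γ t * χ (Y x 0 t)) t := fun t =>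
    (hflow x 0 t).fst
  have hgd : ∀ t, HasDerivAt g (0 : ℝ) t := fun t => (hflow x 0 t).snd
  -- g is constant
  have hgc : ∀ t, g t = g 0 := by
    intro t
    exact is_const_of_deriv_eq_zero (fun s => (hgd s).differentiableAt)
      (fun s => (hgd s).deriv) t 0
  -- f is monotone
  have hfm : Monotone f := by
    apply monotone_of_deriv_nonneg (fun s => (hfd s).differentiableAt)
    intro s
    rw [(hfd s).deriv]
    exact mul_nonneg (hγ0 s) (hχ01 _).1
  -- x at time 0 and 1 in closure
  rw [hcl] at hx hx1 hχ1
  have h0 : Y x 0 0 = x := hinit x 0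
  have hf0 : -l ≤ f 0 := by rw [hf]; simp only [h0]; exact hx.1.1
  have hf1 : f 1 ≤ L + l := hx1.1.2
  have hg0 : g 0 ∈ Set.Icc (-l) (W + l) := by
    have : g 0 = x.2 := by rw [hg]; simp [h0]
    rw [this]; exact hx.2
  -- flow stays in closure for t ∈ [0,1]
  have hstay : ∀ t ∈ Set.Icc (0:ℝ) 1, Y x 0 t ∈ Set.Icc (-l) (L + l) ×ˢ Set.Icc (-l) (W + l) := by
    intro t ht
    constructor
    · exact ⟨le_trans hf0 (hfm ht.1), le_trans (hfm ht.2) hf1⟩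
    · show g t ∈ _
      rw [hgc t]; exact hg0
  -- integrate f' over [1/4, 3/4]
  have hYc : Continuous (Y x 0) := by
    rw [continuous_iff_continuousAt]
    exact fun t => (hflow x 0 t).continuousAt
  have hint : IntervalIntegrable (fun t => γ t * χ (Y x 0 t)) MeasureTheory.volume (1/4) (3/4) :=
    ((hγs.continuous.mul (hχs.continuous.comp hYc))).intervalIntegrable _ _
  have hFTC : f (3/4) - f (1/4) = ∫ t in (1/4 : ℝ)..(3/4), γ t * χ (Y x 0 t) := by
    rw [intervalIntegral.integral_eq_sub_of_hasDerivAt (fun t _ => hfd t) hint]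
  have hconst : (∫ t in (1/4 : ℝ)..(3/4), γ t * χ (Y x 0 t)) = M * (1/2) := by
    rw [intervalIntegral.integral_congr (g := fun _ => M)]
    · simp only [intervalIntegral.integral_const, smul_eq_mul]
      ring
    · intro t ht
      show γ t * χ (Y x 0 t) = M
      rw [Set.uIcc_of_le (by norm_num)] at ht
      have ht01 : t ∈ Set.Icc (0:ℝ) 1 := ⟨by linarith [ht.1], by linarith [ht.2]⟩
      rw [hγM t ht, hχ1 _ (hstay t ht01), mul_one]
  have h14 : -l ≤ f (1/4) := le_trans hf0 (hfm (by norm_num))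
  have h34 : f (3/4) ≤ L + l := le_trans (hfm (by norm_num)) hf1
  rw [hconst] at hFTC
  linarith
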